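/- arXiv:1808.05543 — 2 statements merged into one kernel-verified Lean document; each statement's English description precedes it below -/
import Mathlib

section
/- Let q be a power of a prime and F_q the finite field with q elements. If X ⊆ F_q satisfies |X| > q^{1/2}, then R(X) = F_q. -/
open scoped Classical Pointwise

noncomputable section

namespace STP

variable {F : Type} [Field F]

def collinearTriples (A B : Finset F) : ℕ :=
  (((A ×ˢ A ×ˢ A) ×ˢ (B ×ˢ B ×ˢ B)).filter fun x =>
    (x.1.2.1 - x.1.1) * (x.2.2.2 - x.2.1) = (x.1.2.2 - x.1.1) * (x.2.2.1 - x.2.1)).card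

def IsLine (l : Set (F × F)) : Prop :=
  ∃ a b c : F, (a, b) ≠ (0, 0) ∧ l = {p : F × F | a * p.1 + b * p.2 = c}

def incidences (P : Finset (F × F)) (L : Finset (Set (F × F))) : ℕ :=
  ((P ×ˢ L).filter fun x => x.1 ∈ x.2).card

def kIncidences (P : Finset (F × F)) (L : Finset (Set (F × F))) (k : ℕ) : ℕ :=
  (((Fintype.piFinset fun _ : Fin k => P) ×ˢ L).filter fun x => ∀ i, x.1 i ∈ x.2).card

def numLines (P : Finset (F × F)) : ℕ :=
  Set.ncard {l : Set (F × F) | IsLine l ∧ 2 ≤ (P.filter (· ∈ l)).card}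

def addEnergy (X Y : Finset F) : ℕ :=
  (((X ×ˢ X) ×ˢ (Y ×ˢ Y)).filter fun t => t.1.1 + t.2.1 = t.1.2 + t.2.2).card

def mulEnergy (A : Finset F) : ℕ :=
  (((A ×ˢ A) ×ˢ (A ×ˢ A)).filter fun t => t.1.1 * t.2.1 = t.1.2 * t.2.2).card

def quotSet (X : Finset F) : Set F :=
  {r : F | ∃ x1 ∈ X, ∃ x2 ∈ X, ∃ x3 ∈ X, ∃ x4 ∈ X, x3 ≠ x4 ∧ r = (x1 - x2) / (x3 - x4)}

def subfieldCond (A : Finset F) (C bound : ℝ) : Prop :=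
  ∀ G : Subfield F, G ≠ ⊤ → ∀ c d : F,
    ((A.filter fun x => ∃ g ∈ G, x = c * g + d).card : ℝ) ≤
      C * max ((Nat.card G : ℝ) ^ ((1:ℝ)/2)) bound

def linesOf [Fintype F] (P : Finset (F × F)) : Finset (Set (F × F)) :=
  Set.Finite.toFinset (Set.toFinite {l : Set (F × F) | IsLine l ∧ 2 ≤ (P.filter (· ∈ l)).card})

def tripleCount [Fintype F] (P : Finset (F × F)) : ℕ :=
  ∑ l ∈ linesOf P, ((P.filter (· ∈ l)).card) ^ 3

theorem stmt16 : ∀ (F : Type) [Field F] [Fintype F] (q : ℕ), IsPrimePow q → Fintype.card F = q →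
    ∀ X : Finset F, (q : ℝ) ^ ((1:ℝ)/2) < (X.card : ℝ) →
    quotSet X = Set.univ := by
  intro F _ _ q hq hcard X hX
  ext r
  simp only [Set.mem_univ, iff_true]
  -- |X|^2 > q
  have hq0 : (0:ℝ) ≤ (q:ℝ) := by positivity
  have hsq : ((q:ℝ) ^ ((1:ℝ)/2)) ^ 2 = (q:ℝ) := by
    rw [← Real.rpow_natCast ((q:ℝ) ^ ((1:ℝ)/2)) 2, ← Real.rpow_mul hq0]
    norm_num
  have hlt : (q:ℝ) < (X.card : ℝ) ^ 2 := by
    calc (q:ℝ) = ((q:ℝ) ^ ((1:ℝ)/2)) ^ 2 := hsq.symm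
    _ < (X.card : ℝ) ^ 2 := by
        apply pow_lt_pow_left₀ hX (Real.rpow_nonneg hq0 _) two_ne_zero
  have hltn : q < X.card * X.card := by
    have : q < X.card ^ 2 := by exact_mod_cast hlt
    simpa [sq] using this
  -- pigeonhole on (x, y) ↦ x - r * y
  have hmaps : ∀ p ∈ X ×ˢ X, (p.1 - r * p.2) ∈ (Finset.univ : Finset F) := by
    intro p _; exact Finset.mem_univ _
  have hcards : (Finset.univ : Finset F).card < (X ×ˢ X).card := by
    rw [Finset.card_univ, hcard, Finset.card_product]
    exact hltn
  obtain ⟨p, hp, p', hp', hne, heq⟩ :=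
    Finset.exists_ne_map_eq_of_card_lt_of_maps_to hcards hmaps
  obtain ⟨x1, x3⟩ := p
  obtain ⟨x2, x4⟩ := p'
  simp only [Finset.mem_product] at hp hp'
  have hkey : x1 - x2 = r * (x3 - x4) := by
    have : x1 - r * x3 = x2 - r * x4 := heq
    ring_nf
    ring_nf at this
    linear_combination this
  have h34 : x3 ≠ x4 := by
    intro h
    apply hne
    have : x1 = x2 := by
      have := hkey
      rw [h] at this
      exact sub_eq_zero.mp (by simpa using this)
    rw [h, this]
  refine ⟨x1, hp.1, x2, hp'.1, x3, hp.2, x4, hp'.2, h34, ?_⟩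
  rw [hkey, mul_div_assoc, div_self (sub_ne_zero.mpr h34), mul_one]

end STP
end
end

section
/- Let q be a power of a prime and F_q the finite field with q elements. Let X ⊆ F_q with |X| ≥ 2. Suppose that 1 + R(X) ⊆ R(X) and X·R(X) ⊆ R(X), where 1 + R(X) = {1 + r : r ∈ R(X)} and X·R(X) = {x·r : x ∈ X, r ∈ R(X)}. Then R(X) = F_X, the subfield of F_q generated by X. -/
/-!
Since `R = R(X)` is finite, `1 + R ⊆ R` says that `1` lies in the group `S` of translations
stabilising `R`, and `x • R ⊆ R` says that multiplication by a nonzero `x ∈ X` permutes `R`,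
hence maps `S` into itself. The elements multiplying `S` into itself form a ring containing `X`,
contained in `S` because `1 ∈ S`, and `S ⊆ R` because `0 ∈ R`. So `R` contains the ring generated
by `X`, which is finite and therefore the field `F_X`; the reverse inclusion is clear.
-/

open scoped Classical Pointwise

noncomputable section

section Multipliers

variable {A : Type*} [Ring A]

def AddSubgroup.leftMultipliers (S : AddSubgroup A) : Subring A where
  carrier := {a | ∀ s ∈ S, a * s ∈ S}
  zero_mem' s _ := by simpa only [zero_mul] using S.zero_mem
  one_mem' s hs := by simpa only [one_mul] using hs
  add_mem' ha hb s hs := by simpa only [add_mul] using S.add_mem (ha s hs) (hb s hs)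
  neg_mem' ha s hs := by simpa only [neg_mul] using S.neg_mem (ha s hs)
  mul_mem' ha hb s hs := by simpa only [mul_assoc] using ha _ (hb s hs)

theorem AddSubgroup.mem_leftMultipliers {S : AddSubgroup A} {a : A} :
    a ∈ S.leftMultipliers ↔ ∀ s ∈ S, a * s ∈ S :=
  Iff.rfl

theorem AddSubgroup.leftMultipliers_le {S : AddSubgroup A} (h1 : (1 : A) ∈ S) :
    (S.leftMultipliers : Set A) ⊆ S := fun a ha => by
  simpa only [mul_one, SetLike.mem_coe] using ha 1 h1

end Multipliers

section FiniteSubring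

variable {K : Type*} [DivisionRing K]

theorem Subring.inv_mem_of_finite {s : Subring K} (hs : (s : Set K).Finite) {x : K}
    (hx : x ∈ s) : x⁻¹ ∈ s := by
  rcases eq_or_ne x 0 with rfl | hx0
  · simpa only [inv_zero] using s.zero_mem
  have hbij : Set.BijOn (x * ·) s s :=
    (hs.injOn_iff_bijOn_of_mapsTo fun y hy => s.mul_mem hx hy).1
      (mul_right_injective₀ hx0).injOn
  obtain ⟨y, hy, hxy⟩ := hbij.surjOn s.one_mem
  rwa [← inv_eq_of_mul_eq_one_right hxy] at hy

theorem Subfield.coe_closure_eq_subring_closure [Finite K] (s : Set K) :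
    (Subfield.closure s : Set K) = Subring.closure s :=
  Set.Subset.antisymm
    (Subfield.closure_le (t := (Subring.closure s).toSubfield
      fun _ => Subring.inv_mem_of_finite (Set.toFinite _)).2 Subring.subset_closure)
    (Subring.closure_le (t := (Subfield.closure s).toSubring).2 Subfield.subset_closure)

end FiniteSubring

section TranslationStabilizer

theorem mem_of_mem_addStabilizer {G : Type*} [AddGroup G] {R : Set G} (h0 : (0 : G) ∈ R)
    {t : G} (ht : t ∈ AddAction.stabilizer G R) : t ∈ R := by
  simpa only [vadd_eq_add, add_zero] using (AddAction.mem_stabilizer_set.1 ht 0).2 h0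

variable {K : Type*} [DivisionRing K] {R : Set K}

theorem mul_mem_addStabilizer (hR : R.Finite) {x t : K} (hx : ∀ r ∈ R, x * r ∈ R)
    (ht : t ∈ AddAction.stabilizer K R) : x * t ∈ AddAction.stabilizer K R := by
  rcases eq_or_ne x 0 with rfl | hx0
  · simpa only [zero_mul] using (AddAction.stabilizer K R).zero_mem
  have hu : Units.mk0 x hx0 ∈ MulAction.stabilizer Kˣ R :=
    (MulAction.mem_stabilizer_set' hR).2 hx
  refine (AddAction.mem_stabilizer_set' hR).2 fun r hr => ?_
  have hr' : x⁻¹ * r ∈ R := by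
    simpa [Units.smul_def] using (MulAction.mem_stabilizer_set' hR).1 (inv_mem hu) hr
  have hshift : x * t +ᵥ r = x * (t +ᵥ x⁻¹ * r) := by
    simp only [vadd_eq_add, mul_add, mul_inv_cancel_left₀ hx0]
  rw [hshift]
  exact hx _ ((AddAction.mem_stabilizer_set' hR).1 ht hr')

end TranslationStabilizer

namespace STP

variable {F : Type} [Field F]

theorem zero_mem_quotSet {X : Finset F} (hX : 2 ≤ X.card) : (0 : F) ∈ quotSet X := by
  obtain ⟨a, ha, b, hb, hab⟩ := Finset.one_lt_card.1 hX
  exact ⟨a, ha, a, ha, a, ha, b, hb, hab, by rw [sub_self, zero_div]⟩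

theorem quotSet_subset_closure (X : Finset F) :
    quotSet X ⊆ Subfield.closure (X : Set F) := by
  rintro _ ⟨x₁, h₁, x₂, h₂, x₃, h₃, x₄, h₄, -, rfl⟩
  have hmem {x : F} (hx : x ∈ X) : x ∈ Subfield.closure (X : Set F) := Subfield.subset_closure hx
  exact div_mem (sub_mem (hmem h₁) (hmem h₂)) (sub_mem (hmem h₃) (hmem h₄))

theorem stmt17 : ∀ (F : Type) [Field F] [Fintype F] (q : ℕ), IsPrimePow q → Fintype.card F = q →
    ∀ X : Finset F, 2 ≤ X.card →
    (∀ r ∈ quotSet X, 1 + r ∈ quotSet X) →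
    (∀ x ∈ X, ∀ r ∈ quotSet X, x * r ∈ quotSet X) →
    quotSet X = (Subfield.closure (X : Set F) : Set F) := by
  intro F _ _ q _ _ X hX hadd hmul
  set R := quotSet X
  have hR : R.Finite := Set.toFinite R
  set S := AddAction.stabilizer F R
  have hS1 : (1 : F) ∈ S := (AddAction.mem_stabilizer_set' hR).2 hadd
  have hXS : (X : Set F) ⊆ S.leftMultipliers := fun x hx =>
    AddSubgroup.mem_leftMultipliers.2 fun _ => mul_mem_addStabilizer hR (hmul x hx)
  refine (quotSet_subset_closure X).antisymm ?_
  calc (Subfield.closure (X : Set F) : Set F)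
      = Subring.closure (X : Set F) := Subfield.coe_closure_eq_subring_closure _
    _ ⊆ S.leftMultipliers := Subring.closure_le.2 hXS
    _ ⊆ S := AddSubgroup.leftMultipliers_le hS1
    _ ⊆ R := fun _ => mem_of_mem_addStabilizer (zero_mem_quotSet hX)

end STP
end
end
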